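/- arXiv:dg-ga/9411004 — 3 statements merged into one kernel-verified Lean document; each statement's English description precedes it below -/
import Mathlib

section
/- If a group Γ acts on a topological space X and there exists a family of smooth functions (ρ_γ)_{γ∈Γ} on X with values in [0,∞) such that the family of supports is locally finite, Σ_γ ρ_γ = 1, and the action satisfies γ₁·ρ_γ = ρ_{γ₁γ} (i.e. ρ_γ(γ₁⁻¹ x) = ρ_{γ₁γ}(x)), then for every p ≥ 1 the group cohomology H^p(Γ, C^∞(X)) vanishes, where Γ acts on C^∞(X) by (γ·f)(x) = f(γ⁻¹x). -/
/-- The differential of the homogeneous bar complex: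
`(∂f)(γ₀,…,γ_{q+1}) = ∑ i (-1)^i f(γ₀,…,γ̂_i,…,γ_{q+1})`. -/
def barD {Γ : Type*} {A : Type*} [AddCommGroup A] {q : ℕ}
    (f : (Fin (q + 1) → Γ) → A) : (Fin (q + 2) → Γ) → A := fun g =>
  ∑ i : Fin (q + 2), ((-1 : ℤ) ^ (i : ℕ)) • f (g ∘ i.succAbove)

/-- Composing `Fin.cons γ g` with `succAbove 0` gives back `g`. -/
lemma cons_comp_succAbove_zero {Γ : Type*} {n : ℕ} (γ : Γ) (g : Fin (n + 1) → Γ) :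
    Fin.cons γ g ∘ (0 : Fin (n + 2)).succAbove = g := by
  funext j
  simp [Fin.succAbove]

/-- Composing `Fin.cons γ g` with `succAbove i.succ`. -/
lemma cons_comp_succAbove_succ {Γ : Type*} {n : ℕ} (γ : Γ) (g : Fin (n + 1) → Γ)
    (i : Fin (n + 1)) :
    Fin.cons γ g ∘ (Fin.succ i).succAbove = Fin.cons γ (g ∘ i.succAbove) := by
  funext j
  refine Fin.cases ?_ (fun j => ?_) j
  · simp [Fin.succ_succAbove_zero]
  · simp [Fin.succ_succAbove_succ]

/-- If a group `Γ` acts on a topological space `X` admitting an equivariant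
partition of unity `(ρ_γ)_{γ∈Γ}` (nonnegative, locally finite supports, `∑_γ ρ_γ = 1`,
`ρ_γ(γ₁⁻¹ x) = ρ_{γ₁γ}(x)`), then `H^p(Γ, C(X)) = 0` for every `p ≥ 1`, where group
cohomology is computed by the complex of `Γ`-invariant homogeneous bar cochains with
values in the functions on `X`, with `Γ` acting by `(γ·f)(x) = f(γ⁻¹ x)`.
(A cochain of degree `p = q + 1 ≥ 1` has `q + 2` arguments.) -/
theorem stmt0 {Γ : Type*} [Group Γ] {X : Type*} [TopologicalSpace X] [MulAction Γ X]
    (hact : ∀ γ : Γ, Continuous fun x : X => γ • x)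
    (ρ : Γ → X → ℝ) (hρc : ∀ γ, Continuous (ρ γ)) (hρ0 : ∀ γ x, 0 ≤ ρ γ x)
    (hlf : LocallyFinite fun γ => Function.support (ρ γ))
    (hsum : ∀ x, HasSum (fun γ => ρ γ x) 1)
    (hequiv : ∀ γ₁ γ x, ρ γ (γ₁⁻¹ • x) = ρ (γ₁ * γ) x) :
    ∀ q (f : (Fin (q + 2) → Γ) → X → ℝ),
      (∀ g, Continuous (f g)) →
      (∀ γ g x, f g x = f (fun j => γ⁻¹ * g j) (γ⁻¹ • x)) →
      barD f = 0 →
      ∃ F : (Fin (q + 1) → Γ) → X → ℝ,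
        (∀ g, Continuous (F g)) ∧
        (∀ γ g x, F g x = F (fun j => γ⁻¹ * g j) (γ⁻¹ • x)) ∧
        barD F = f := by
  intro q f hfc hfe hcoc
  classical
  set F : (Fin (q + 1) → Γ) → X → ℝ :=
    fun g x => ∑ᶠ γ, ρ γ x * f (Fin.cons γ g) x with hFdef
  have hsupp : ∀ (g : Fin (q + 1) → Γ) (γ : Γ),
      (Function.support fun x => ρ γ x * f (Fin.cons γ g) x) ⊆ Function.support (ρ γ) := by
    intro g γ x hx h0
    exact hx (by simp [Function.mem_support] at h0 ⊢; simp [h0])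
  -- pointwise finite set of relevant γ's
  have hptfin : ∀ x : X, {γ : Γ | ρ γ x ≠ 0}.Finite := by
    intro x
    exact hlf.point_finite x
  -- F as a finite sum at each point
  have hFfin : ∀ (g : Fin (q + 1) → Γ) (x : X),
      F g x = ∑ γ ∈ (hptfin x).toFinset, ρ γ x * f (Fin.cons γ g) x := by
    intro g x
    refine finsum_eq_finset_sum_of_support_subset _ ?_
    intro γ hγ
    simp only [Function.mem_support] at hγ
    have : ρ γ x ≠ 0 := fun h => hγ (by simp [h])
    simpa using this
  refine ⟨F, ?_, ?_, ?_⟩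
  · intro g
    exact continuous_finsum (fun γ => (hρc γ).mul (hfc _)) (hlf.subset (hsupp g))
  · intro γ₁ g x
    have hre : ∀ γ' : Γ,
        ρ γ' (γ₁⁻¹ • x) * f (Fin.cons γ' fun j => γ₁⁻¹ * g j) (γ₁⁻¹ • x)
          = ρ (γ₁ * γ') x * f (Fin.cons (γ₁ * γ') g) x := by
      intro γ'
      rw [hequiv]
      congr 1
      rw [hfe γ₁ (Fin.cons (γ₁ * γ') g) x]
      congr 1
      funext j
      refine Fin.cases ?_ (fun j => ?_) j
      · simp [mul_assoc]
      · simp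
    calc F g x = ∑ᶠ γ, ρ γ x * f (Fin.cons γ g) x := rfl
      _ = ∑ᶠ γ', ρ (γ₁ * γ') x * f (Fin.cons (γ₁ * γ') g) x :=
          (finsum_comp (fun γ' => γ₁ * γ') (Equiv.mulLeft γ₁).bijective).symm
      _ = ∑ᶠ γ', ρ γ' (γ₁⁻¹ • x) * f (Fin.cons γ' fun j => γ₁⁻¹ * g j) (γ₁⁻¹ • x) := by
          simp only [hre]
      _ = F (fun j => γ₁⁻¹ * g j) (γ₁⁻¹ • x) := rfl
  · funext g x
    have hS1 : ∑ γ ∈ (hptfin x).toFinset, ρ γ x = 1 := by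
      refine (hasSum_sum_of_ne_finset_zero ?_).unique (hsum x)
      intro γ hγ
      by_contra h
      exact hγ (by simpa using h)
    -- the cocycle identity specialized at `Fin.cons γ g` and `x`
    have hcocx : ∀ γ : Γ,
        f g x = ∑ i : Fin (q + 2), ((-1 : ℤ) ^ (i : ℕ)) •
          f (Fin.cons γ (g ∘ i.succAbove)) x := by
      intro γ
      have h0 := congrFun (congrFun hcoc (Fin.cons γ g)) x
      rw [barD] at h0
      rw [Fin.sum_univ_succ] at h0
      simp only [Pi.zero_apply, Pi.add_apply, Finset.sum_apply, Pi.smul_apply] at h0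
      rw [cons_comp_succAbove_zero] at h0
      have h1 : ∀ i : Fin (q + 2),
          ((-1 : ℤ) ^ ((Fin.succ i : Fin (q + 3)) : ℕ)) • f (Fin.cons γ g ∘ (Fin.succ i).succAbove) x
            = -(((-1 : ℤ) ^ (i : ℕ)) • f (Fin.cons γ (g ∘ i.succAbove)) x) := by
        intro i
        rw [cons_comp_succAbove_succ]
        simp [Fin.val_succ, pow_succ, mul_comm]
      rw [Finset.sum_congr rfl (fun i _ => h1 i)] at h0
      simp only [Finset.sum_neg_distrib, Fin.val_zero, pow_zero, one_smul] at h0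
      linarith [h0]
    calc barD F g x
        = ∑ i : Fin (q + 2), ((-1 : ℤ) ^ (i : ℕ)) •
            (∑ γ ∈ (hptfin x).toFinset, ρ γ x * f (Fin.cons γ (g ∘ i.succAbove)) x) := by
          rw [barD]
          simp only [Finset.sum_apply, Pi.smul_apply]
          exact Finset.sum_congr rfl fun i _ => by rw [hFfin]
      _ = ∑ γ ∈ (hptfin x).toFinset, ρ γ x *
            (∑ i : Fin (q + 2), ((-1 : ℤ) ^ (i : ℕ)) • f (Fin.cons γ (g ∘ i.succAbove)) x) := by
          simp only [Finset.smul_sum]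
          rw [Finset.sum_comm]
          refine Finset.sum_congr rfl fun γ _ => ?_
          rw [Finset.mul_sum]
          refine Finset.sum_congr rfl fun i _ => ?_
          simp [zsmul_eq_mul]
          ring
      _ = ∑ γ ∈ (hptfin x).toFinset, ρ γ x * f g x := by
          refine Finset.sum_congr rfl fun γ _ => ?_
          rw [← hcocx γ]
      _ = f g x := by rw [← Finset.sum_mul, hS1, one_mul]
end

section
/- (Double complex closed-range lemma) Let (L^{i,j})_{i,j≥0} be a double complex of topological vector spaces (Fréchet or duals of Fréchet) with horizontal differentials d and vertical differentials ∂, augmented by complexes (K^i, ∂) on the left and (H^j, d) on top, such that every row 0 → K^i → L^{i,0} → L^{i,1} → ⋯ and every column 0 → H^j → L^{0,j} → L^{1,j} → ⋯ is exact, with K^*, H^* carrying the subspace topologies. If the differentials of the complex 0 → H^0 → H^1 → H^2 → ⋯ all have closed range, then the differentials of the complex 0 → K^0 → K^1 → K^2 → ⋯ also all have closed range. -/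
/-!
By column exactness `ker (dv 0 j) = ιH (H j)`, so `dh 0 j` maps it onto `ιH (dH (H j))`, which is
closed. By induction on `i`, every `dh i j '' ker (dv i j)` and every `dv i j '' ker (dh i j)` is
closed: the first passes to the second by the analytic lemma below, and the diagram chase
`dh (i+1) j '' ker (dv (i+1) j) = dv i (j+1) '' ker (dh i (j+1))` (both are the image of `L i j`
under the commuting square) passes to the next row. Finally `ιK (i+1)` identifies `range (dK i)`
with `dv i 0 '' ker (dh i 0)`.

The analytic lemma: if `T : E → F` is a map of Fréchet spaces with closed range and `d` is
continuous with `d (ker T)` closed, then `T (ker d)` is closed. Indeed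
`ker d + ker T = d⁻¹ (d (ker T))` is closed and `T`-saturated, so the open mapping theorem for
`T : E → range T` sends it to a closed set. The open mapping theorem for F-spaces over any
nontrivially normed field: by Baire, `closure (T '' V)` is a neighbourhood of `0` for every
neighbourhood `V`, and successive approximation along a basis with `u (n+1) + u (n+1) ⊆ u n`
removes the closure.
-/

open Filter Topology Set Pointwise

theorem sum_mem_of_add_subset {E : Type*} [AddCommMonoid E] {u : ℕ → Set E} (hu : Antitone u)
    (hu0 : ∀ n, (0 : E) ∈ u n) (hadd : ∀ n, u (n + 1) + u (n + 1) ⊆ u n) {x : ℕ → E}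
    (hx : ∀ i, x i ∈ u (i + 1)) (t : Finset ℕ) {n : ℕ} (ht : ∀ i ∈ t, n ≤ i) :
    ∑ i ∈ t, x i ∈ u n := by
  induction t using Finset.induction_on_min generalizing n with
  | empty => simpa using hu0 n
  | insert a s has ih =>
    rw [Finset.sum_insert fun h => (has a h).false]
    have ha : n + 1 ≤ a + 1 := Nat.succ_le_succ (ht a (Finset.mem_insert_self a s))
    exact hadd n <| Set.add_mem_add (hu ha (hx a)) (hu ha (ih fun i hi => has i hi))

theorem tendsto_nhds_zero_of_mem_closure_image {E F : Type*} [Zero E] [TopologicalSpace E]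
    [Zero F] [TopologicalSpace F] [RegularSpace F] {u : ℕ → Set E} (hu : (𝓝 0).HasAntitoneBasis u)
    {T : E → F} (hT : ContinuousAt T 0) (hT0 : T 0 = 0) {z : ℕ → F}
    (hz : ∀ n, z n ∈ closure (T '' u n)) : Tendsto z atTop (𝓝 0) := by
  rw [(closed_nhds_basis 0).tendsto_right_iff]
  rintro W ⟨hW, hWc⟩
  obtain ⟨m, hm⟩ := hu.mem_iff.mp (hT.preimage_mem_nhds (hT0 ▸ hW))
  filter_upwards [eventually_ge_atTop m] with n hn
  exact closure_minimal (image_subset_iff.mpr ((hu.antitone hn).trans hm)) hWc (hz n)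

section Iteration

variable {E F : Type*} [AddCommGroup F] [TopologicalSpace F] [IsTopologicalAddGroup F]

theorem AddMonoidHom.exists_seq_sub_map_sum_mem_closure [AddCommGroup E] (T : E →+ F)
    {u : ℕ → Set E} (h : ∀ n, closure (T '' u n) ∈ 𝓝 0) {y : F} (hy : y ∈ closure (T '' u 1)) :
    ∃ x : ℕ → E, ∀ n, x n ∈ u (n + 1) ∧
      y - T (∑ i ∈ Finset.range n, x i) ∈ closure (T '' u (n + 1)) := by
  have step : ∀ n, ∀ z ∈ closure (T '' u (n + 1)),
      ∃ x ∈ u (n + 1), z - T x ∈ closure (T '' u (n + 2)) := by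
    intro n z hz
    have hnhds : (z - ·) ⁻¹' closure (T '' u (n + 2)) ∈ 𝓝 z :=
      (continuous_sub_left z).continuousAt.preimage_mem_nhds (by simpa using h (n + 2))
    obtain ⟨_, hw, x, hx, rfl⟩ := mem_closure_iff_nhds.mp hz _ hnhds
    exact ⟨x, hx, hw⟩
  choose! g hgu hgz using step
  let z : ℕ → F := fun n => Nat.rec y (fun n zn => zn - T (g n zn)) n
  have hz : ∀ n, z n ∈ closure (T '' u (n + 1)) := fun n => by
    induction n with
    | zero => exact hy
    | succ n ih => exact hgz n _ ih
  have hzy : ∀ n, z n = y - T (∑ i ∈ Finset.range n, g i (z i)) := fun n => by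
    induction n with
    | zero => simp [z]
    | succ n ih => rw [Finset.sum_range_succ, map_add, ← sub_sub, ← ih]
  exact ⟨fun n => g n (z n), fun n => ⟨hgu n _ (hz n), hzy n ▸ hz n⟩⟩

variable [AddCommGroup E] [UniformSpace E] [IsUniformAddGroup E] [CompleteSpace E] [T2Space F]

theorem AddMonoidHom.closure_image_subset_image_closure (T : E →+ F) (hT : Continuous T)
    {u : ℕ → Set E} (hu : (𝓝 0).HasAntitoneBasis u) (hadd : ∀ n, u (n + 1) + u (n + 1) ⊆ u n)
    (h : ∀ n, closure (T '' u n) ∈ 𝓝 0) : closure (T '' u 1) ⊆ T '' closure (u 0) := by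
  intro y hy
  obtain ⟨x, hx⟩ := T.exists_seq_sub_map_sum_mem_closure h hy
  have hu0 : ∀ n, (0 : E) ∈ u n := fun n => mem_of_mem_nhds (hu.mem n)
  have htail : ∀ (t : Finset ℕ) n, (∀ i ∈ t, n ≤ i) → ∑ i ∈ t, x i ∈ u n :=
    fun t n => sum_mem_of_add_subset hu.antitone hu0 hadd (fun i => (hx i).1) t
  obtain ⟨a, ha⟩ : Summable x := summable_iff_vanishing.mpr fun e he => by
    obtain ⟨n, hn⟩ := hu.mem_iff.mp he
    exact ⟨Finset.range n, fun t ht => hn <| htail t n fun i hi => by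
      simpa using Finset.disjoint_left.mp ht hi⟩
  refine ⟨a, mem_closure_of_tendsto ha (.of_forall fun t => htail t 0 fun i _ => i.zero_le), ?_⟩
  have hlim : Tendsto (fun n => y - T (∑ i ∈ Finset.range n, x i)) atTop (𝓝 0) :=
    tendsto_nhds_zero_of_mem_closure_image hu hT.continuousAt (map_zero T)
      fun n => closure_mono (image_mono (hu.antitone n.le_succ)) (hx n).2
  refine tendsto_nhds_unique ((ha.map T hT).tendsto_sum_nat) ?_
  simpa using (tendsto_const_nhds (x := y)).sub hlim

end Iteration

section AlmostOpen

variable {𝕜 E F : Type*} [NontriviallyNormedField 𝕜]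
  [AddCommGroup E] [Module 𝕜 E] [TopologicalSpace E] [IsTopologicalAddGroup E]
  [ContinuousSMul 𝕜 E]
  [AddCommGroup F] [Module 𝕜 F] [TopologicalSpace F] [IsTopologicalAddGroup F]
  [ContinuousConstSMul 𝕜 F]

theorem LinearMap.closure_image_mem_nhds_zero_of_surjective [BaireSpace F] (T : E →ₗ[𝕜] F)
    (hT : Function.Surjective T) {U : Set E} (hU : U ∈ 𝓝 0) : closure (T '' U) ∈ 𝓝 0 := by
  obtain ⟨V, hV, hVU⟩ := exists_nhds_half_neg hU
  obtain ⟨c, hc⟩ := NormedField.exists_one_lt_norm 𝕜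
  have hc0 : ∀ n : ℕ, c ^ n ≠ 0 := fun n => pow_ne_zero n (norm_pos_iff.mp (one_pos.trans hc))
  have hpow : Tendsto (c ^ ·) atTop (Bornology.cobounded 𝕜) := by
    rw [← tendsto_norm_atTop_iff_cobounded]
    simpa using tendsto_pow_atTop_atTop_of_one_lt hc
  have hcover : ⋃ n : ℕ, c ^ n • closure (T '' V) = univ := by
    refine eq_univ_of_forall fun y => ?_
    obtain ⟨x, rfl⟩ := hT y
    obtain ⟨n, hn⟩ := (hpow.eventually (absorbent_nhds_zero (𝕜 := 𝕜) hV x)).exists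
    obtain ⟨v, hv, rfl⟩ := hn rfl
    exact mem_iUnion.2 ⟨n, T v, subset_closure (mem_image_of_mem T hv), (map_smul T _ v).symm⟩
  obtain ⟨n, hn⟩ := nonempty_interior_of_iUnion_of_closed
    (fun n => isClosed_closure.smul_of_ne_zero (hc0 n)) hcover
  rw [interior_smul₀ (hc0 n)] at hn
  obtain ⟨_, y₀, hy₀, rfl⟩ := hn
  -- `z = (z + y₀) - y₀` with both terms in `closure (T '' V)` once `z` is small
  have hshift : (· + y₀) ⁻¹' closure (T '' V) ∈ 𝓝 0 :=
    (continuous_add_const y₀).continuousAt.preimage_mem_nhds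
      (by simpa using mem_interior_iff_mem_nhds.mp hy₀)
  refine mem_of_superset hshift fun z hz => ?_
  simpa using map_mem_closure₂ continuous_sub hz (interior_subset hy₀) (u := T '' U) <| by
    rintro _ ⟨p, hp, rfl⟩ _ ⟨q, hq, rfl⟩
    exact ⟨p - q, hVU p hp q hq, map_sub T p q⟩

end AlmostOpen

theorem IsUniformAddGroup.baireSpace (G : Type*) [AddGroup G] [UniformSpace G] [IsUniformAddGroup G]
    [CompleteSpace G] [FirstCountableTopology G] : BaireSpace G :=
  have := IsUniformAddGroup.uniformity_countably_generated (α := G)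
  inferInstance

section OpenMapping

variable {𝕜 E F : Type*} [NontriviallyNormedField 𝕜]
  [AddCommGroup E] [Module 𝕜 E] [UniformSpace E] [IsUniformAddGroup E] [ContinuousSMul 𝕜 E]
  [CompleteSpace E] [FirstCountableTopology E]
  [AddCommGroup F] [Module 𝕜 F] [TopologicalSpace F] [IsTopologicalAddGroup F]
  [ContinuousConstSMul 𝕜 F] [BaireSpace F] [T2Space F]

theorem ContinuousLinearMap.isOpenMap_of_baireSpace (T : E →L[𝕜] F)
    (hT : Function.Surjective T) : IsOpenMap T := by
  refine IsTopologicalAddGroup.isOpenMap_iff_nhds_zero.mpr fun U hU => ?_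
  obtain ⟨u, hu, hadd⟩ := IsTopologicalAddGroup.exists_antitone_basis_nhds_zero E
  obtain ⟨W, ⟨hW, hWc⟩, hWU⟩ := (closed_nhds_basis (0 : E)).mem_iff.mp hU
  obtain ⟨k, hk⟩ := hu.mem_iff.mp hW
  have hu' : (𝓝 0).HasAntitoneBasis (u ∘ (k + ·)) :=
    hu.comp_strictMono (strictMono_id.const_add k)
  have hnhds : ∀ n, closure (T '' (u ∘ (k + ·)) n) ∈ 𝓝 0 := fun n =>
    (T : E →ₗ[𝕜] F).closure_image_mem_nhds_zero_of_surjective hT (hu'.mem n)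
  have hclosure := (T : E →+ F).closure_image_subset_image_closure T.continuous hu'
    (fun n => hadd (k + n)) hnhds
  exact mem_of_superset (hnhds 1)
    (hclosure.trans (image_subset_iff.mpr ((closure_minimal hk hWc).trans hWU)))

end OpenMapping

section ClosedRange

variable {𝕜 E F : Type*} [NontriviallyNormedField 𝕜]
  [AddCommGroup E] [Module 𝕜 E] [UniformSpace E] [IsUniformAddGroup E] [ContinuousSMul 𝕜 E]
  [CompleteSpace E] [FirstCountableTopology E]
  [AddCommGroup F] [Module 𝕜 F] [UniformSpace F] [IsUniformAddGroup F] [ContinuousSMul 𝕜 F]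
  [CompleteSpace F] [FirstCountableTopology F] [T2Space F]

theorem ContinuousLinearMap.isClosed_image_of_isClosed_range (T : E →L[𝕜] F)
    (hT : IsClosed (range T)) {W : Set E} (hW : IsClosed W) (hsat : T ⁻¹' (T '' W) = W) :
    IsClosed (T '' W) := by
  let R := LinearMap.range (T : E →ₗ[𝕜] F)
  have hR : IsClosed (R : Set F) := by rwa [LinearMap.coe_range, ContinuousLinearMap.coe_coe]
  have : CompleteSpace R := hR.completeSpace_coe
  have : IsUniformAddGroup R := R.toAddSubgroup.isUniformAddGroup
  have : FirstCountableTopology R := IsInducing.subtypeVal.firstCountableTopology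
  have : BaireSpace R := IsUniformAddGroup.baireSpace R
  let T' : E →L[𝕜] R := T.codRestrict R (LinearMap.mem_range_self (T : E →ₗ[𝕜] F))
  have hT' : Function.Surjective T' := fun ⟨_, x, hx⟩ => ⟨x, Subtype.ext hx⟩
  have hquot := (T'.isOpenMap_of_baireSpace hT').isQuotientMap T'.continuous hT'
  have hsat' : T' ⁻¹' (T' '' W) = W := by
    refine Eq.trans ?_ hsat
    ext x
    simp only [mem_preimage, mem_image, Subtype.ext_iff]
    rfl
  have himage : IsClosed (T' '' W) := hquot.isClosed_preimage.mp (hsat'.symm ▸ hW)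
  have : T '' W = Subtype.val '' (T' '' W) := by
    rw [image_image]; rfl
  rw [this]
  exact hR.isClosedEmbedding_subtypeVal.isClosedMap _ himage

theorem ContinuousLinearMap.isClosed_image_ker_of_isClosed_image_ker {G : Type*}
    [AddCommGroup G] [Module 𝕜 G] [TopologicalSpace G] (T : E →L[𝕜] F) (d : E →L[𝕜] G)
    (hT : IsClosed (range T)) (hd : IsClosed (d '' {x | T x = 0})) :
    IsClosed (T '' {x | d x = 0}) := by
  let W := d ⁻¹' (d '' {x | T x = 0})
  have himage : T '' W = T '' {x | d x = 0} := by
    refine subset_antisymm ?_ (image_mono fun x hx => ⟨0, by simp, by simp [hx.out]⟩)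
    rintro _ ⟨x, ⟨k, hk, hdk⟩, rfl⟩
    exact ⟨x - k, by simp [hdk], by simp [hk.out]⟩
  have hsat : T ⁻¹' (T '' W) = W := by
    refine subset_antisymm ?_ (subset_preimage_image T W)
    rintro x ⟨w, ⟨k, hk, hdk⟩, hTw⟩
    refine ⟨k + (x - w), ?_, ?_⟩
    · simp [hk.out, hTw]
    · simp [hdk]
  rw [← himage]
  exact T.isClosed_image_of_isClosed_range hT (hd.preimage d.continuous) hsat

end ClosedRange

section DoubleComplex

variable {𝕜 : Type*} [NontriviallyNormedField 𝕜] {L : ℕ → ℕ → Type*}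
  [∀ i j, AddCommGroup (L i j)] [∀ i j, Module 𝕜 (L i j)] [∀ i j, UniformSpace (L i j)]
  (dh : ∀ i j, L i j →L[𝕜] L i (j + 1)) (dv : ∀ i j, L i j →L[𝕜] L (i + 1) j)
  (hsq : ∀ i j, (dv i (j + 1)).comp (dh i j) = (dh (i + 1) j).comp (dv i j))
  (hrow : ∀ i j, range (dh i j) = {x | dh i (j + 1) x = 0})
  (hcol : ∀ i j, range (dv i j) = {x | dv (i + 1) j x = 0})

include hsq hrow hcol in
theorem image_dh_succ_ker_dv_eq (i j : ℕ) :
    dh (i + 1) j '' {x | dv (i + 1) j x = 0} = dv i (j + 1) '' {x | dh i (j + 1) x = 0} := by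
  rw [← hcol, ← hrow, ← range_comp, ← range_comp, ← ContinuousLinearMap.coe_comp,
    ← ContinuousLinearMap.coe_comp, hsq]

variable [∀ i j, IsUniformAddGroup (L i j)] [∀ i j, ContinuousSMul 𝕜 (L i j)]
  [∀ i j, CompleteSpace (L i j)] [∀ i j, FirstCountableTopology (L i j)] [∀ i j, T2Space (L i j)]

include hcol in
theorem isClosed_image_dv_of_isClosed_image_dh {i j : ℕ}
    (h : IsClosed (dh i j '' {x | dv i j x = 0})) : IsClosed (dv i j '' {x | dh i j x = 0}) :=
  (dv i j).isClosed_image_ker_of_isClosed_image_ker (dh i j)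
    (hcol i j ▸ isClosed_eq (dv (i + 1) j).continuous continuous_const) h

include hsq hrow hcol in
theorem isClosed_image_dv_ker_dh (h0 : ∀ j, IsClosed (dh 0 j '' {x | dv 0 j x = 0}))
    (i j : ℕ) : IsClosed (dv i j '' {x | dh i j x = 0}) := by
  suffices ∀ i j, IsClosed (dh i j '' {x | dv i j x = 0}) from
    isClosed_image_dv_of_isClosed_image_dh dh dv hcol (this i j)
  intro i
  induction i with
  | zero => exact h0
  | succ i ih =>
    intro j
    rw [image_dh_succ_ker_dv_eq dh dv hsq hrow hcol]
    exact isClosed_image_dv_of_isClosed_image_dh dh dv hcol (ih (j + 1))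

end DoubleComplex

theorem stmt8_general
    {L : ℕ → ℕ → Type*} {K : ℕ → Type*} {H : ℕ → Type*}
    [∀ i j, AddCommGroup (L i j)] [∀ i j, Module ℂ (L i j)]
    [∀ i j, UniformSpace (L i j)] [∀ i j, IsUniformAddGroup (L i j)]
    [∀ i j, ContinuousSMul ℂ (L i j)] [∀ i j, CompleteSpace (L i j)]
    [∀ i j, TopologicalSpace.MetrizableSpace (L i j)]
    [∀ i, AddCommGroup (K i)] [∀ i, Module ℂ (K i)] [∀ i, UniformSpace (K i)]
    [∀ j, AddCommGroup (H j)] [∀ j, Module ℂ (H j)] [∀ j, UniformSpace (H j)]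
    -- differentials of the double complex
    (dh : ∀ i j, L i j →L[ℂ] L i (j + 1))
    (dv : ∀ i j, L i j →L[ℂ] L (i + 1) j)
    -- the augmentations and their differentials
    (ιK : ∀ i, K i →L[ℂ] L i 0) (dK : ∀ i, K i →L[ℂ] K (i + 1))
    (ιH : ∀ j, H j →L[ℂ] L 0 j) (dH : ∀ j, H j →L[ℂ] H (j + 1))
    -- the double complex commutes
    (hsq : ∀ i j, (dv i (j + 1)).comp (dh i j) = (dh (i + 1) j).comp (dv i j))
    (hKsq : ∀ i, (dv i 0).comp (ιK i) = (ιK (i + 1)).comp (dK i))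
    (hHsq : ∀ j, (dh 0 j).comp (ιH j) = (ιH (j + 1)).comp (dH j))
    -- the rows are exact
    (hKinj : ∀ i, Function.Injective (ιK i))
    (hrow0 : ∀ i, Set.range (ιK i) = {x | dh i 0 x = 0})
    (hrow : ∀ i j, Set.range (dh i j) = {x | dh i (j + 1) x = 0})
    -- the columns are exact
    (hHinj : ∀ j, Function.Injective (ιH j))
    (hcol0 : ∀ j, Set.range (ιH j) = {x | dv 0 j x = 0})
    (hcol : ∀ i j, Set.range (dv i j) = {x | dv (i + 1) j x = 0})
    -- `K i` and `H j` carry the subspace topologies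
    (hHtop : ∀ j, Topology.IsInducing (ιH j))
    -- the differentials of `H •` have closed range
    (hclosed : ∀ j, IsClosed (Set.range (dH j))) :
    -- then the differentials of `K •` have closed range
    ∀ i, IsClosed (Set.range (dK i)) := by
  intro i
  have hH : ∀ j, IsClosed (dh 0 j '' {x | dv 0 j x = 0}) := by
    intro j
    have hι : IsClosedEmbedding (ιH (j + 1)) := ⟨⟨hHtop (j + 1), hHinj (j + 1)⟩,
      hcol0 (j + 1) ▸ isClosed_eq (dv 0 (j + 1)).continuous continuous_const⟩
    rw [← hcol0, ← range_comp, ← ContinuousLinearMap.coe_comp, hHsq,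
      ContinuousLinearMap.coe_comp, range_comp]
    exact hι.isClosedMap _ (hclosed j)
  have hK : range (dK i) = ιK (i + 1) ⁻¹' (dv i 0 '' {x | dh i 0 x = 0}) := by
    rw [← hrow0, ← range_comp, ← ContinuousLinearMap.coe_comp, hKsq,
      ContinuousLinearMap.coe_comp, range_comp, preimage_image_eq _ (hKinj (i + 1))]
  rw [hK]
  exact (isClosed_image_dv_ker_dh dh dv hsq hrow hcol hH i 0).preimage (ιK (i + 1)).continuous

/-- double complex closed-range lemma: Let `(L i j)` be a double complex of
Fréchet spaces with horizontal differentials `dh` and vertical differentials `dv`,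
augmented on the left by a complex `(K i, dK)` and on top by a complex `(H j, dH)`, with
all rows `0 → K i → L i 0 → L i 1 → ⋯` and all columns `0 → H j → L 0 j → L 1 j → ⋯`
exact, and `K`, `H` carrying the subspace topologies.  If all differentials of the
complex `0 → H 0 → H 1 → ⋯` have closed range, then so do all differentials of the
complex `0 → K 0 → K 1 → ⋯`. -/
theorem stmt8
    {L : ℕ → ℕ → Type*} {K : ℕ → Type*} {H : ℕ → Type*}
    [∀ i j, AddCommGroup (L i j)] [∀ i j, Module ℂ (L i j)]
    [∀ i j, UniformSpace (L i j)] [∀ i j, IsUniformAddGroup (L i j)]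
    [∀ i j, ContinuousSMul ℂ (L i j)] [∀ i j, CompleteSpace (L i j)]
    [∀ i j, TopologicalSpace.MetrizableSpace (L i j)] [∀ i j, LocallyConvexSpace ℝ (L i j)]
    [∀ i, AddCommGroup (K i)] [∀ i, Module ℂ (K i)] [∀ i, UniformSpace (K i)]
    [∀ i, IsUniformAddGroup (K i)] [∀ i, ContinuousSMul ℂ (K i)]
    [∀ j, AddCommGroup (H j)] [∀ j, Module ℂ (H j)] [∀ j, UniformSpace (H j)]
    [∀ j, IsUniformAddGroup (H j)] [∀ j, ContinuousSMul ℂ (H j)]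
    -- differentials of the double complex
    (dh : ∀ i j, L i j →L[ℂ] L i (j + 1))
    (dv : ∀ i j, L i j →L[ℂ] L (i + 1) j)
    -- the augmentations and their differentials
    (ιK : ∀ i, K i →L[ℂ] L i 0) (dK : ∀ i, K i →L[ℂ] K (i + 1))
    (ιH : ∀ j, H j →L[ℂ] L 0 j) (dH : ∀ j, H j →L[ℂ] H (j + 1))
    -- the double complex commutes
    (hsq : ∀ i j, (dv i (j + 1)).comp (dh i j) = (dh (i + 1) j).comp (dv i j))
    (hKsq : ∀ i, (dv i 0).comp (ιK i) = (ιK (i + 1)).comp (dK i))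
    (hHsq : ∀ j, (dh 0 j).comp (ιH j) = (ιH (j + 1)).comp (dH j))
    -- the rows are exact
    (hKinj : ∀ i, Function.Injective (ιK i))
    (hrow0 : ∀ i, Set.range (ιK i) = {x | dh i 0 x = 0})
    (hrow : ∀ i j, Set.range (dh i j) = {x | dh i (j + 1) x = 0})
    -- the columns are exact
    (hHinj : ∀ j, Function.Injective (ιH j))
    (hcol0 : ∀ j, Set.range (ιH j) = {x | dv 0 j x = 0})
    (hcol : ∀ i j, Set.range (dv i j) = {x | dv (i + 1) j x = 0})
    -- `K i` and `H j` carry the subspace topologies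
    (hKtop : ∀ i, Topology.IsInducing (ιK i))
    (hHtop : ∀ j, Topology.IsInducing (ιH j))
    -- the differentials of `H •` have closed range
    (hclosed : ∀ j, IsClosed (Set.range (dH j))) :
    -- then the differentials of `K •` have closed range
    ∀ i, IsClosed (Set.range (dK i)) :=
  stmt8_general dh dv ιK dK ιH dH hsq hKsq hHsq hKinj hrow0 hrow hHinj hcol0 hcol hHtop hclosed
end

section
/- Let V be a module over a commutative ring Z acting by a character χ₀ on its cohomology in the following sense: V = ⊕_{i∈I} V_i is a (topological) direct sum of subcomplexes of a complex (R^•, d) of Z-modules, where each summand V_i is annihilated by (A − χ_i(A)) for characters χ_i ≠ χ₀, and there exist finitely many elements A_1,…,A_m ∈ Z and ε > 0 with: for each i there is j(i) such that |χ_i(A_{j(i)}) − χ₀(A_{j(i)})| ≥ ε. If every cohomology class [α] of (R^•, d) satisfies (A − χ₀(A))[α] = 0 for all A ∈ Z, then H^p(R^•, d) = 0 for all p. -/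
/-!
Decompose a cocycle `α` into its components `αᵢ` along the subcomplexes `Vᵢ`. On `Vᵢ` the
operator `A - χ₀(A)` is the scalar `χᵢ(A) - χ₀(A)`, and the decomposition is respected both
by this operator and by `d`. Hence `(A - χ₀(A))α = dβ` gives `(χᵢ(A) - χ₀(A))αᵢ = dβᵢ`
componentwise, and choosing for each `i` some `A` with `χᵢ(A) ≠ χ₀(A)` exhibits every
`αᵢ`, and so `α`, as a coboundary. In degree `0` the same argument runs with `d` replaced
by the zero map.
-/

namespace DirectSum

section AddCommMonoid

variable {ι M N σ τ : Type*} [DecidableEq ι] [AddCommMonoid M] [AddCommMonoid N]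
  [SetLike σ M] [AddSubmonoidClass σ M] [SetLike τ N] [AddSubmonoidClass τ N]
  (𝓜 : ι → σ) (𝓝 : ι → τ) [Decomposition 𝓜] [Decomposition 𝓝]

theorem decompose_map_of_mapsTo {F : Type*} [FunLike F M N] [AddMonoidHomClass F M N]
    (f : F) (hf : ∀ i, ∀ x ∈ 𝓜 i, f x ∈ 𝓝 i) (x : M) (i : ι) :
    (decompose 𝓝 (f x) i : N) = f (decompose 𝓜 x i) := by
  induction x using Decomposition.inductionOn 𝓜 with
  | zero => simp
  | @homogeneous j x =>
    obtain rfl | hji := eq_or_ne j i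
    · rw [decompose_of_mem_same 𝓝 (hf j x x.2), decompose_of_mem_same 𝓜 x.2]
    · rw [decompose_of_mem_ne 𝓝 (hf j x x.2) hji, decompose_of_mem_ne 𝓜 x.2 hji, map_zero]
  | add x y hx hy => simp only [map_add, decompose_add, add_apply, AddMemClass.coe_add, hx, hy]

theorem mem_of_forall_decompose_mem {S : AddSubmonoid M} {x : M}
    (h : ∀ i, (decompose 𝓜 x i : M) ∈ S) : x ∈ S := by
  classical
  rw [← sum_support_decompose 𝓜 x]
  exact sum_mem fun i _ => h i

end AddCommMonoid

variable {ι K M N Z : Type*} [DecidableEq ι] [Field K] [AddCommGroup M] [Module K M]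
  [AddCommGroup N] [Module K N]
  (𝓜 : ι → Submodule K M) (𝓝 : ι → Submodule K N) [Decomposition 𝓜] [Decomposition 𝓝]

theorem decompose_apply_of_eq_smul (T : Module.End K N) (c : ι → K)
    (hT : ∀ i, ∀ x ∈ 𝓝 i, T x = c i • x) (y : N) (i : ι) :
    (decompose 𝓝 (T y) i : N) = c i • (decompose 𝓝 y i : N) := by
  have hmaps : ∀ i, ∀ x ∈ 𝓝 i, T x ∈ 𝓝 i := fun i x hx => hT i x hx ▸ Submodule.smul_mem _ _ hx
  rw [decompose_map_of_mapsTo 𝓝 𝓝 T hmaps, hT i _ (decompose 𝓝 y i).2]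

theorem mem_range_of_forall_sub_smul_mem_range (f : M →ₗ[K] N)
    (hf : ∀ i, ∀ x ∈ 𝓜 i, f x ∈ 𝓝 i) (φ : Z → Module.End K N) (χ : ι → Z → K) (χ₀ : Z → K)
    (hχ : ∀ i z, ∀ x ∈ 𝓝 i, φ z x = χ i z • x) (hsep : ∀ i, ∃ z, χ i z ≠ χ₀ z) {y : N}
    (hy : ∀ z, φ z y - χ₀ z • y ∈ LinearMap.range f) : y ∈ LinearMap.range f := by
  refine mem_of_forall_decompose_mem 𝓝 (S := (LinearMap.range f).toAddSubmonoid) fun i => ?_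
  obtain ⟨z, hz⟩ := hsep i
  obtain ⟨x, hx⟩ := hy z
  have hcomp : f (decompose 𝓜 x i) = (χ i z - χ₀ z) • (decompose 𝓝 y i : N) := by
    rw [← decompose_map_of_mapsTo 𝓜 𝓝 f hf, hx, decompose_sub, decompose_smul, sub_apply,
      Submodule.coe_sub, decompose_apply_of_eq_smul 𝓝 (φ z) (χ · z) (hχ · z)]
    simp only [smul_apply, Submodule.coe_smul, sub_smul]
  refine ⟨(χ i z - χ₀ z)⁻¹ • decompose 𝓜 x i, ?_⟩
  rw [map_smul, hcomp, smul_smul, inv_mul_cancel₀ (sub_ne_zero.mpr hz), one_smul]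

end DirectSum

open DirectSum

theorem stmt17_general {R : ℕ → Type*} [∀ p, AddCommGroup (R p)] [∀ p, Module ℂ (R p)]
    {Z : Type*} [CommRing Z]
    (d : ∀ p, R p →ₗ[ℂ] R (p + 1))
    (φ : ∀ p, Z →+* Module.End ℂ (R p))
    {I : Type*} [DecidableEq I] (V : I → ∀ p, Submodule ℂ (R p))
    (hinternal : ∀ p, DirectSum.IsInternal fun i => V i p)
    (hVd : ∀ i p, ∀ x ∈ V i p, d p x ∈ V i (p + 1))
    (χ : I → Z →+* ℂ) (χ₀ : Z →+* ℂ)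
    (hchar : ∀ i p z, ∀ x ∈ V i p, φ p z x = χ i z • x)
    (m : ℕ) (A : Fin m → Z) (ε : ℝ) (hε : 0 < ε)
    (hsep : ∀ i, ∃ j, ε ≤ ‖χ i (A j) - χ₀ (A j)‖)
    -- every cohomology class is annihilated by `A - χ₀(A)` for all `A ∈ Z`
    (hcoc0 : ∀ α : R 0, d 0 α = 0 → ∀ z : Z, φ 0 z α - χ₀ z • α = 0)
    (hcoc : ∀ p (α : R (p + 1)), d (p + 1) α = 0 → ∀ z : Z,
      ∃ β : R p, φ (p + 1) z α - χ₀ z • α = d p β) :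
    (∀ α : R 0, d 0 α = 0 → α = 0) ∧
    (∀ p (α : R (p + 1)), d (p + 1) α = 0 → ∃ γ : R p, d p γ = α) := by
  have _ : ∀ p, Decomposition fun i => V i p := fun p => (hinternal p).chooseDecomposition
  have hne : ∀ i, ∃ z, χ i z ≠ χ₀ z := fun i => by
    obtain ⟨j, hj⟩ := hsep i
    refine ⟨A j, fun h => ?_⟩
    rw [h, sub_self, norm_zero] at hj
    linarith
  refine ⟨fun α hα => ?_, fun p α hα => ?_⟩
  · have h := mem_range_of_forall_sub_smul_mem_range (fun i => V i 0) (fun i => V i 0)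
      0 (fun _ _ _ => zero_mem _) (φ 0) (fun i => χ i) χ₀ (fun i => hchar i 0) hne
      (y := α) fun z => by simp [hcoc0 α hα z]
    simpa using h
  · exact mem_range_of_forall_sub_smul_mem_range (fun i => V i p)
      (fun i => V i (p + 1)) (d p) (fun i => hVd i p) (φ (p + 1)) (fun i => χ i) χ₀
      (fun i => hchar i (p + 1)) hne fun z => (hcoc p α hα z).imp fun _ h => h.symm

/-- Let `(R•, d)` be a complex of complex vector spaces on which a
commutative ring `Z` acts (commuting with `d`), decomposing as a direct sum of
`Z`-stable subcomplexes `V i` on which `Z` acts through characters `χ i`.  Suppose there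
are finitely many elements `A 0, …, A (m-1)` of `Z` and `ε > 0` separating every `χ i`
from a fixed character `χ₀` (`∃ j, |χ i (A j) - χ₀ (A j)| ≥ ε`).  If every cohomology
class `[α]` satisfies `(A - χ₀(A))[α] = 0` for all `A ∈ Z`, then `H^p(R•, d) = 0`
for all `p`. -/
theorem stmt17 {R : ℕ → Type*} [∀ p, AddCommGroup (R p)] [∀ p, Module ℂ (R p)]
    {Z : Type*} [CommRing Z]
    (d : ∀ p, R p →ₗ[ℂ] R (p + 1)) (hdd : ∀ p, (d (p + 1)).comp (d p) = 0)
    (φ : ∀ p, Z →+* Module.End ℂ (R p))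
    (hφd : ∀ p z, (d p).comp (φ p z) = (φ (p + 1) z).comp (d p))
    {I : Type*} [DecidableEq I] (V : I → ∀ p, Submodule ℂ (R p))
    (hinternal : ∀ p, DirectSum.IsInternal fun i => V i p)
    (hVd : ∀ i p, ∀ x ∈ V i p, d p x ∈ V i (p + 1))
    (χ : I → Z →+* ℂ) (χ₀ : Z →+* ℂ)
    (hchar : ∀ i p z, ∀ x ∈ V i p, φ p z x = χ i z • x)
    (m : ℕ) (A : Fin m → Z) (ε : ℝ) (hε : 0 < ε)
    (hsep : ∀ i, ∃ j, ε ≤ ‖χ i (A j) - χ₀ (A j)‖)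
    -- every cohomology class is annihilated by `A - χ₀(A)` for all `A ∈ Z`
    (hcoc0 : ∀ α : R 0, d 0 α = 0 → ∀ z : Z, φ 0 z α - χ₀ z • α = 0)
    (hcoc : ∀ p (α : R (p + 1)), d (p + 1) α = 0 → ∀ z : Z,
      ∃ β : R p, φ (p + 1) z α - χ₀ z • α = d p β) :
    (∀ α : R 0, d 0 α = 0 → α = 0) ∧
    (∀ p (α : R (p + 1)), d (p + 1) α = 0 → ∃ γ : R p, d p γ = α) :=
  stmt17_general d φ V hinternal hVd χ χ₀ hchar m A ε hε hsep hcoc0 hcoc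
end
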